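/- arXiv:1905.00165 — 2 statements merged into one kernel-verified Lean document; each statement's English description precedes it below -/
import Mathlib

section
/- Let K be an n×n complex matrix and p a determinantal point process with marginal kernel K. Then for every finset Y of Fin n, the individual probability p(Y) (regarded as a complex number) equals (−1)^{n − |Y|} · det(K − 𝟙_{Yᶜ}), where Yᶜ is the complement of Y in Fin n. -/
open Matrix

/-- The submatrix of `K` with rows indexed by `A` and columns indexed by `B`. -/
def kSub {n : ℕ} (K : Matrix (Fin n) (Fin n) ℂ) (A B : Finset (Fin n)) :
    Matrix A B ℂ :=
  Matrix.of fun i j => K i j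

/-- `p` is a determinantal point process with marginal kernel `K`:
`p` is a probability mass function on finsets of `Fin n` and for every finset `Y`
the probability that `Y` is contained in the sample equals `det (K_Y)`. -/
def IsDPP {n : ℕ} (K : Matrix (Fin n) (Fin n) ℂ) (p : Finset (Fin n) → ℝ) : Prop :=
  (∀ S, 0 ≤ p S) ∧ (∑ S : Finset (Fin n), p S = 1) ∧
    ∀ Y : Finset (Fin n),
      ((∑ S ∈ Finset.univ.filter fun S => Y ⊆ S, p S : ℝ) : ℂ) =
        (kSub K Y Y).det


/-- The diagonal 0/1 indicator matrix of a finset `J`. -/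
def indMat {n : ℕ} (J : Finset (Fin n)) : Matrix (Fin n) (Fin n) ℂ :=
  Matrix.diagonal fun i => if i ∈ J then 1 else 0

/-!
Expanding `det (K - 𝟙_{Yᶜ})` multilinearly in the rows, the term that keeps the rows of `K`
indexed by `S` vanishes unless `Y ⊆ S`, and is then `(-1)^|Sᶜ| det K_S`. On the other side,
`det K_S = ∑_{U ⊇ S} p U` is inverted by Möbius inversion on the lattice of finsets,
`p Y = ∑_{S ⊇ Y} (-1)^|S \ Y| det K_S`, and the two signs combine to `(-1)^|Yᶜ|`.
-/

open Finset

namespace Finset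

variable {α : Type*} [DecidableEq α]

theorem sum_Icc_neg_one_pow_card_sdiff {R : Type*} [Ring R] (s t : Finset α) :
    ∑ u ∈ Icc s t, (-1 : R) ^ #(u \ s) = if s = t then 1 else 0 := by
  by_cases hst : s ⊆ t
  · have hinj : Set.InjOn (s ∪ ·) (t \ s).powerset := fun a ha b hb hab => by
      simp only [coe_powerset, Set.mem_preimage, Set.mem_powerset_iff, coe_subset,
        subset_sdiff] at ha hb
      rw [← union_sdiff_cancel_left ha.2.symm, ← union_sdiff_cancel_left hb.2.symm]
      exact congrArg (· \ s) hab
    have hempty : t \ s = ∅ ↔ s = t :=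
      sdiff_eq_empty_iff_subset.trans ⟨hst.antisymm, fun h => h ▸ subset_rfl⟩
    rw [Icc_eq_image_powerset hst, sum_image hinj]
    calc ∑ u ∈ (t \ s).powerset, (-1 : R) ^ #((s ∪ u) \ s)
        = ((∑ u ∈ (t \ s).powerset, (-1 : ℤ) ^ #u : ℤ) : R) := by
          push_cast
          refine sum_congr rfl fun u hu => ?_
          rw [union_sdiff_cancel_left (subset_sdiff.mp (mem_powerset.mp hu)).2.symm]
      _ = if s = t then 1 else 0 := by
          simp only [sum_powerset_neg_one_pow_card, hempty]
          split_ifs <;> simp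
  · rw [Icc_eq_empty (by simpa using hst), sum_empty, if_neg (by rintro rfl; exact hst subset_rfl)]

theorem eq_sum_Ici_neg_one_pow_card_sdiff_mul [Fintype α] {R : Type*} [Ring R]
    {f g : Finset α → R} (hg : ∀ s, g s = ∑ t ∈ Ici s, f t) (s : Finset α) :
    f s = ∑ t ∈ Ici s, (-1 : R) ^ #(t \ s) * g t := by
  calc f s = ∑ u ∈ Ici s, (if s = u then 1 else 0) * f u := by simp
    _ = ∑ u ∈ Ici s, ∑ t ∈ Icc s u, (-1 : R) ^ #(t \ s) * f u := by
        simp only [← sum_mul, sum_Icc_neg_one_pow_card_sdiff]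
    _ = ∑ t ∈ Ici s, ∑ u ∈ Ici t, (-1 : R) ^ #(t \ s) * f u :=
        sum_comm' fun u t => by
          simp only [mem_Ici, mem_Icc]
          exact ⟨fun h => ⟨h.2.2, h.2.1⟩, fun h => ⟨h.2.trans h.1, h.2, h.1⟩⟩
    _ = ∑ t ∈ Ici s, (-1 : R) ^ #(t \ s) * g t := by simp only [hg, mul_sum]

end Finset

namespace Matrix

variable {ι R : Type*} [Fintype ι] [DecidableEq ι] [CommRing R]

theorem det_add_diagonal (A : Matrix ι ι R) (d : ι → R) :
    (A + diagonal d).det =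
      ∑ s : Finset ι, (∏ i ∈ sᶜ, d i) * (A.submatrix ((↑) : s → ι) (↑)).det := by
  change detRowAlternating (A.row + (diagonal d).row) = _
  rw [detRowAlternating.map_add_univ]
  refine sum_congr rfl fun s _ => ?_
  let B : Matrix ι ι R := of (s.piecewise A.row (1 : Matrix ι ι R).row)
  have hrow : s.piecewise A.row (diagonal d).row =
      of fun i j => (if i ∈ s then 1 else d i) * B i j := by
    ext i j
    by_cases hi : i ∈ s <;> simp [B, hi, diagonal_apply, one_apply]
  change det _ = _
  rw [hrow, det_mul_column, det_piecewise_one_eq_submatrix_det, prod_ite, prod_const_one, one_mul]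
  congr 2
  ext i
  simp

end Matrix

theorem det_sub_indMat_compl {n : ℕ} (K : Matrix (Fin n) (Fin n) ℂ) (Y : Finset (Fin n)) :
    (K - indMat Yᶜ).det = ∑ S ∈ Ici Y, (-1 : ℂ) ^ #Sᶜ * (kSub K S S).det := by
  have hprod : ∀ S : Finset (Fin n),
      ∏ i ∈ Sᶜ, -(if i ∈ Yᶜ then 1 else 0 : ℂ) = if Y ⊆ S then (-1) ^ #Sᶜ else 0 := by
    intro S
    split_ifs with hYS
    · rw [prod_congr rfl fun i hi => by rw [if_pos (compl_subset_compl.mpr hYS hi)], prod_const]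
    · obtain ⟨i, hiY, hiS⟩ := not_subset.mp hYS
      exact prod_eq_zero (mem_compl.mpr hiS) (by simp [hiY])
  rw [indMat, sub_eq_add_neg, Matrix.diagonal_neg, Matrix.det_add_diagonal]
  simp only [hprod, ite_mul, zero_mul, ← sum_filter, filter_le_eq_Ici]
  rfl -- `kSub K S S` unfolds to `K.submatrix (↑) (↑)`

theorem IsDPP.det_kSub_eq_sum_Ici {n : ℕ} {K : Matrix (Fin n) (Fin n) ℂ} {p : Finset (Fin n) → ℝ}
    (hp : IsDPP K p) (Y : Finset (Fin n)) : (kSub K Y Y).det = ∑ S ∈ Ici Y, (p S : ℂ) := by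
  rw [← hp.2.2 Y, ← filter_le_eq_Ici]
  push_cast
  rfl

theorem stmt_9 {n : ℕ} (K : Matrix (Fin n) (Fin n) ℂ) (p : Finset (Fin n) → ℝ)
    (hp : IsDPP K p) (Y : Finset (Fin n)) :
    ((p Y : ℝ) : ℂ) = (-1 : ℂ) ^ (n - Y.card) * (K - indMat Yᶜ).det := by
  rw [eq_sum_Ici_neg_one_pow_card_sdiff_mul (f := fun S => (p S : ℂ)) hp.det_kSub_eq_sum_Ici Y,
    det_sub_indMat_compl, mul_sum]
  refine sum_congr rfl fun S hS => ?_
  have hcard : n - #Y = #Sᶜ + #(S \ Y) := by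
    have hYS := card_le_card (mem_Ici.mp hS)
    have hSn := card_le_univ S
    rw [Fintype.card_fin] at hSn
    rw [card_compl, card_sdiff_of_subset (mem_Ici.mp hS), Fintype.card_fin]
    omega
  have hsq : (-1 : ℂ) ^ #Sᶜ * (-1) ^ #Sᶜ = 1 := by rw [← pow_add, Even.neg_one_pow ⟨_, rfl⟩]
  rw [hcard, pow_add]
  linear_combination (-(-1 : ℂ) ^ #(S \ Y) * (kSub K S S).det) * hsq
end

section
/- Let K be an n×n complex matrix, p a determinantal point process with marginal kernel K, and a : Fin n an index with K a a ≠ 1. Let B = Fin n \ {a}, and define K'' = K_B − (K a a − 1)⁻¹ · K_{B,{a}} · K_{{a},B}, a matrix indexed by B. Then for every finset Y with a ∉ Y, the sum of p(S) over all finsets S with Y ⊆ S and a ∉ S equals (1 − K a a) · det(K''_Y). In other words, the conditional law of 𝐘 given a ∉ 𝐘 is a determinantal point process on the ground set Fin n \ {a} with marginal kernel K''. -/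
/-!
By inclusion–exclusion, `P(Y ⊆ 𝐘, a ∉ 𝐘) = det K_Y - det K_{Y ∪ {a}}`. Write `K_{Y ∪ {a}}` as a
block matrix whose bottom-right corner is the `1 × 1` block `K a a`. Its determinant is affine
in that corner, so `det K_Y - det K_{Y ∪ {a}}` is minus the determinant of the same block matrix
with corner `K a a - 1`. The Schur complement formula evaluates that as
`(K a a - 1) * det K''_Y`.
-/

open Matrix

/-- Restriction of a matrix indexed by a finset `B` to a finset `Y ⊆ B`. -/
def kRestrict {n : ℕ} {B : Finset (Fin n)} (M : Matrix B B ℂ) (Y : Finset (Fin n))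
    (h : Y ⊆ B) : Matrix Y Y ℂ :=
  Matrix.of fun i j => M ⟨i, h i.2⟩ ⟨j, h j.2⟩

open Finset

namespace Matrix

variable {ι R : Type*} [Fintype ι] [DecidableEq ι]

theorem det_fromBlocks_unit_add [CommRing R] (A : Matrix ι ι R) (B : Matrix ι Unit R)
    (C : Matrix Unit ι R) (d e : R) :
    (fromBlocks A B C (of fun _ _ => d + e)).det =
      (fromBlocks A B C (of fun _ _ => d)).det + e * A.det := by
  set M := fromBlocks A B C (of fun _ _ => d)
  have hcorner : fromBlocks A B C (of fun _ _ => d + e) =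
      M.updateRow (.inr ()) (M (.inr ()) + e • Pi.single (.inr ()) 1) := by
    ext (i | i) (j | j) <;> simp [M, updateRow_apply]
  have hunit : M.updateRow (.inr ()) (Pi.single (.inr ()) 1) = fromBlocks A B 0 1 := by
    ext (i | i) (j | j) <;> simp [M, updateRow_apply]
  rw [hcorner, det_updateRow_add, updateRow_eq_self, det_updateRow_smul, hunit,
    det_fromBlocks_zero₂₁, det_one, mul_one]

theorem det_fromBlocks_unit [Field R] (A : Matrix ι ι R) (B : Matrix ι Unit R)
    (C : Matrix Unit ι R) {c : R} (hc : c ≠ 0) :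
    (fromBlocks A B C (of fun _ _ => c)).det = c * (A - c⁻¹ • (B * C)).det := by
  have hfactor : fromBlocks A B C (of fun _ _ => c) =
      fromBlocks 1 0 0 (of fun _ _ => c) * fromBlocks A B (c⁻¹ • C) 1 := by
    rw [fromBlocks_multiply]
    congr 1 <;> ext <;> simp [mul_apply, hc]
  rw [hfactor, det_mul, det_fromBlocks_zero₂₁, det_fromBlocks_one₂₂, det_one, det_unique,
    Matrix.mul_smul]
  simp

theorem det_sub_det_fromBlocks_unit [Field R] (A : Matrix ι ι R) (B : Matrix ι Unit R)
    (C : Matrix Unit ι R) {d : R} (hd : d ≠ 1) :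
    A.det - (fromBlocks A B C (of fun _ _ => d)).det =
      (1 - d) * (A - (d - 1)⁻¹ • (B * C)).det := by
  have hsplit := det_fromBlocks_unit_add A B C (d - 1) 1
  rw [sub_add_cancel] at hsplit
  rw [hsplit, det_fromBlocks_unit A B C (sub_ne_zero.2 hd)]
  ring

end Matrix

theorem Finset.sum_filter_subset_and_notMem {α M : Type*} [Fintype α] [DecidableEq α]
    [AddCommGroup M] (f : Finset α → M) (Y : Finset α) (a : α) :
    ∑ S with Y ⊆ S ∧ a ∉ S, f S = ∑ S with Y ⊆ S, f S - ∑ S with insert a Y ⊆ S, f S := by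
  rw [eq_sub_iff_add_eq, ← sum_filter_not_add_sum_filter (univ.filter (Y ⊆ ·)) (a ∈ ·),
    filter_filter, filter_filter]
  congr 2
  ext S
  simp [insert_subset_iff, and_comm]

section Kernel

variable {n : ℕ} (K : Matrix (Fin n) (Fin n) ℂ) {Y : Finset (Fin n)} {a : Fin n}

theorem kSub_insert_submatrix (hY : a ∉ Y) :
    (kSub K (insert a Y) (insert a Y)).submatrix
        ((Finset.subtypeInsertEquivOption hY).trans (Equiv.optionEquivSumPUnit _)).symm
        ((Finset.subtypeInsertEquivOption hY).trans (Equiv.optionEquivSumPUnit _)).symm =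
      fromBlocks (kSub K Y Y) (of fun (i : Y) (_ : Unit) => K i a)
        (of fun (_ : Unit) (j : Y) => K a j) (of fun _ _ => K a a) := by
  ext (i | i) (j | j) <;> rfl

theorem det_kSub_insert (hY : a ∉ Y) :
    (kSub K (insert a Y) (insert a Y)).det =
      (fromBlocks (kSub K Y Y) (of fun (i : Y) (_ : Unit) => K i a)
        (of fun (_ : Unit) (j : Y) => K a j)
        (of fun _ _ => K a a)).det := by
  rw [← kSub_insert_submatrix K hY, det_submatrix_equiv_self]

theorem kRestrict_sub_smul_kSub_mul (c : ℂ) (h : Y ⊆ {a}ᶜ) :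
    kRestrict (kSub K {a}ᶜ {a}ᶜ - c • (kSub K {a}ᶜ {a} * kSub K {a} {a}ᶜ)) Y h =
      kSub K Y Y -
        c • (of (fun (i : Y) (_ : Unit) => K i a) * of fun (_ : Unit) (j : Y) => K a j) := by
  ext i j
  simp [kRestrict, kSub, mul_apply]

end Kernel

theorem stmt_15 {n : ℕ} (K : Matrix (Fin n) (Fin n) ℂ) (p : Finset (Fin n) → ℝ)
    (hp : IsDPP K p) (a : Fin n) (ha : K a a ≠ 1) :
    ∀ Y : Finset (Fin n), (hY : a ∉ Y) →
      ((∑ S ∈ Finset.univ.filter fun S => Y ⊆ S ∧ a ∉ S, p S : ℝ) : ℂ) =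
        (1 - K a a) *
          (kRestrict
              (kSub K {a}ᶜ {a}ᶜ -
                (K a a - 1)⁻¹ • (kSub K {a}ᶜ {a} * kSub K {a} {a}ᶜ))
              Y
              (by
                intro x hx
                simp only [Finset.mem_compl, Finset.mem_singleton]
                rintro rfl
                exact hY hx)).det := by
  intro Y hY
  rw [Finset.sum_filter_subset_and_notMem, Complex.ofReal_sub, hp.2.2, hp.2.2,
    det_kSub_insert K hY, det_sub_det_fromBlocks_unit _ _ _ ha,
    kRestrict_sub_smul_kSub_mul]
end
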